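/- Let α = e^{2πi/3} and Δ(k) = e^{ik} + e^{-ik} + α(e^{iαk} + e^{-iαk}) + α²(e^{iα²k} + e^{-iα²k}). There exist a constant C > 0 and N ∈ ℕ such that for every integer n ≥ N there is exactly one real number k_n ∈ ((2n−1)π, 2nπ) with Δ(k_n) = 0, and this root satisfies |k_n − (2n − 1/3)π| ≤ C e^{−√3 n π}. -/

import Mathlib

noncomputable def cubeRoot : ℂ := Complex.exp (2 * Real.pi * Complex.I / 3)

noncomputable def Δ (k : ℂ) : ℂ :=
  Complex.exp (Complex.I * k) + Complex.exp (-(Complex.I * k)) +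
  cubeRoot * (Complex.exp (Complex.I * cubeRoot * k) + Complex.exp (-(Complex.I * cubeRoot * k))) +
  cubeRoot ^ 2 * (Complex.exp (Complex.I * cubeRoot ^ 2 * k) +
    Complex.exp (-(Complex.I * cubeRoot ^ 2 * k)))

open Real

lemma cubeRoot_eq : cubeRoot = Complex.ofReal (-(1/2)) + Complex.ofReal (Real.sqrt 3 / 2) * Complex.I := by
  have h : (2 * (Real.pi:ℂ) * Complex.I / 3) = ((2*Real.pi/3 : ℝ) : ℂ) * Complex.I := by
    push_cast; ring
  rw [cubeRoot, h, Complex.exp_mul_I, ← Complex.ofReal_cos, ← Complex.ofReal_sin]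
  have h1 : (2*Real.pi/3 : ℝ) = Real.pi - Real.pi/3 := by ring
  rw [h1, Real.cos_pi_sub, Real.sin_pi_sub, Real.cos_pi_div_three, Real.sin_pi_div_three]

lemma exp_re_im (a b : ℝ) : Complex.exp (Complex.ofReal a + Complex.ofReal b * Complex.I)
    = Complex.ofReal (Real.exp a) * (Complex.ofReal (Real.cos b) + Complex.ofReal (Real.sin b) * Complex.I) := by
  simp [Complex.exp_add, Complex.exp_mul_I, Complex.ofReal_exp, Complex.ofReal_cos, Complex.ofReal_sin]

noncomputable def gr (k : ℝ) : ℝ :=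
  2 * Real.cos k + 2 * Real.exp (Real.sqrt 3 / 2 * k) * Real.cos (k/2 + 2*π/3)
    + 2 * Real.exp (-(Real.sqrt 3 / 2 * k)) * Real.cos (k/2 - 2*π/3)

lemma delta_real (k : ℝ) : Δ k = Complex.ofReal (gr k) := by
  have hs : Real.sqrt 3 * Real.sqrt 3 = 3 := Real.mul_self_sqrt (by norm_num)
  have h1 : Complex.I * (k:ℂ) = Complex.ofReal 0 + Complex.ofReal k * Complex.I := by push_cast; ring
  have h2 : -(Complex.I * (k:ℂ)) = Complex.ofReal 0 + Complex.ofReal (-k) * Complex.I := by push_cast; ring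
  have h3 : Complex.I * cubeRoot * (k:ℂ) = Complex.ofReal (-(Real.sqrt 3/2*k)) + Complex.ofReal (-(k/2)) * Complex.I := by
    rw [cubeRoot_eq]
    apply Complex.ext <;> simp [Complex.add_re, Complex.mul_re, Complex.mul_im] <;> ring
  have h4 : -(Complex.I * cubeRoot * (k:ℂ)) = Complex.ofReal (Real.sqrt 3/2*k) + Complex.ofReal (k/2) * Complex.I := by
    rw [h3]; push_cast; ring
  have hsq : cubeRoot ^ 2 = Complex.ofReal (-(1/2)) + Complex.ofReal (-(Real.sqrt 3 / 2)) * Complex.I := by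
    rw [cubeRoot_eq]
    apply Complex.ext <;> simp [Complex.add_re, Complex.mul_re, Complex.mul_im, pow_two] <;> nlinarith [hs]
  have h5 : Complex.I * cubeRoot^2 * (k:ℂ) = Complex.ofReal (Real.sqrt 3/2*k) + Complex.ofReal (-(k/2)) * Complex.I := by
    rw [hsq]
    apply Complex.ext <;> simp [Complex.add_re, Complex.mul_re, Complex.mul_im] <;> ring
  have h6 : -(Complex.I * cubeRoot^2 * (k:ℂ)) = Complex.ofReal (-(Real.sqrt 3/2*k)) + Complex.ofReal (k/2) * Complex.I := by
    rw [h5]; push_cast; ring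
  rw [Δ, h2, h1, h4, h3, h6, h5, hsq, cubeRoot_eq, exp_re_im, exp_re_im, exp_re_im, exp_re_im, exp_re_im, exp_re_im, gr]
  have e1 : Real.cos (k/2 + 2*π/3) = Real.cos (k/2) * Real.cos (2*π/3) - Real.sin (k/2) * Real.sin (2*π/3) := Real.cos_add _ _
  have e2 : Real.cos (k/2 - 2*π/3) = Real.cos (k/2) * Real.cos (2*π/3) + Real.sin (k/2) * Real.sin (2*π/3) := Real.cos_sub _ _
  have c23 : Real.cos (2*π/3) = -(1/2) := by
    have h1 : (2*π/3 : ℝ) = π - π/3 := by ring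
    rw [h1, Real.cos_pi_sub, Real.cos_pi_div_three]
  have s23 : Real.sin (2*π/3) = Real.sqrt 3/2 := by
    have h1 : (2*π/3 : ℝ) = π - π/3 := by ring
    rw [h1, Real.sin_pi_sub, Real.sin_pi_div_three]
  rw [e1, e2, c23, s23]
  have ck : Real.cos k = Real.cos (k/2)^2 - Real.sin (k/2)^2 := by
    have : k = k/2 + k/2 := by ring
    rw [this, Real.cos_add]; ring
  have hc : Real.cos (-k) = Real.cos k := Real.cos_neg k
  have hs2 : Real.sin (-k) = -Real.sin k := Real.sin_neg k
  have hcn : ∀ x:ℝ, Real.cos (-x) = Real.cos x := Real.cos_neg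
  have hsn : ∀ x:ℝ, Real.sin (-x) = -Real.sin x := Real.sin_neg
  rw [ck, Real.exp_zero]
  apply Complex.ext
  · simp only [Complex.add_re, Complex.add_im, Complex.mul_re, Complex.mul_im,
      Complex.ofReal_re, Complex.ofReal_im, Complex.I_re, Complex.I_im, Complex.one_re,
      Complex.one_im, hcn, hsn]
    linear_combination ck
  · simp only [Complex.add_re, Complex.add_im, Complex.mul_re, Complex.mul_im,
      Complex.ofReal_re, Complex.ofReal_im, Complex.I_re, Complex.I_im, Complex.one_re,
      Complex.one_im, hcn, hsn]
    ring_nf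

-- parity trig helpers
lemma cos_add_nat_pi (x : ℝ) (n : ℕ) : Real.cos (x + n*π) = (-1)^n * Real.cos x := by
  induction n with
  | zero => simp
  | succ m ih =>
    have h : x + (m+1:ℕ)*π = (x + m*π) + π := by push_cast; ring
    rw [h, Real.cos_add_pi, ih]
    push_cast; ring

lemma cos_add_nat_pi_add_half (x : ℝ) (n : ℕ) :
    Real.cos (x + n*π + π/2) = -((-1:ℝ)^n * Real.sin x) := by
  have h : x + n*π + π/2 = (x + π/2) + n*π := by ring
  rw [h, cos_add_nat_pi, Real.cos_add_pi_div_two]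
  ring

noncomputable def Kc (n : ℕ) : ℝ := (2*(n:ℝ) - 1/3)*π

noncomputable def Fn (n : ℕ) (k : ℝ) : ℝ :=
  2*(Real.exp (Real.sqrt 3/2*k) * Real.sin ((k - Kc n)/2))
  - (2*(-1:ℝ)^n) * Real.cos (k - Kc n - π/3)
  - 2*(Real.exp (-(Real.sqrt 3/2*k)) * Real.cos ((k - Kc n)/2 - 5*π/6))

lemma gr_eq_Fn (n : ℕ) (k : ℝ) : gr k = (-(-1:ℝ)^n) * Fn n k := by
  have e1 : Real.cos (k/2 + 2*π/3) = -((-1:ℝ)^n * Real.sin ((k - Kc n)/2)) := by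
    have h : k/2 + 2*π/3 = (k - Kc n)/2 + n*π + π/2 := by rw [Kc]; ring
    rw [h, cos_add_nat_pi_add_half]
  have e2 : Real.cos (k/2 - 2*π/3) = (-1:ℝ)^n * Real.cos ((k - Kc n)/2 - 5*π/6) := by
    have h : k/2 - 2*π/3 = ((k - Kc n)/2 - 5*π/6) + n*π := by rw [Kc]; ring
    rw [h, cos_add_nat_pi]
  have e3 : Real.cos k = Real.cos (k - Kc n - π/3) := by
    have h : k = (k - Kc n - π/3) + n*(2*π) := by rw [Kc]; ring
    conv_lhs => rw [h]
    rw [Real.cos_add_nat_mul_two_pi]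
  rcases Nat.even_or_odd n with hp | hp
  · rw [gr, Fn, e1, e2, e3, hp.neg_one_pow]; ring
  · rw [gr, Fn, e1, e2, e3, hp.neg_one_pow]; ring

lemma delta_zero_iff (n : ℕ) (k : ℝ) : Δ k = 0 ↔ Fn n k = 0 := by
  rw [delta_real, Complex.ofReal_eq_zero, gr_eq_Fn n k, mul_eq_zero]
  constructor
  · rintro (h | h)
    · exfalso
      rcases Nat.even_or_odd n with hp | hp
      · rw [hp.neg_one_pow] at h; norm_num at h
      · rw [hp.neg_one_pow] at h; norm_num at h
    · exact h
  · intro h; exact Or.inr h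

noncomputable def Fn' (n : ℕ) (k : ℝ) : ℝ :=
  2*(Real.exp (Real.sqrt 3/2*k) *
      (Real.sqrt 3/2 * Real.sin ((k - Kc n)/2) + 1/2 * Real.cos ((k - Kc n)/2)))
  + (2*(-1:ℝ)^n) * Real.sin (k - Kc n - π/3)
  + Real.exp (-(Real.sqrt 3/2*k)) *
      (Real.sqrt 3 * Real.cos ((k - Kc n)/2 - 5*π/6) + Real.sin ((k - Kc n)/2 - 5*π/6))

lemma hasDerivAt_Fn (n : ℕ) (k : ℝ) : HasDerivAt (Fn n) (Fn' n k) k := by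
  have hlin : HasDerivAt (fun x : ℝ => Real.sqrt 3/2*x) (Real.sqrt 3/2) k := by
    simpa using (hasDerivAt_id k).const_mul (Real.sqrt 3/2)
  have hE : HasDerivAt (fun x : ℝ => Real.exp (Real.sqrt 3/2*x))
      (Real.exp (Real.sqrt 3/2*k) * (Real.sqrt 3/2)) k := hlin.exp
  have hEm : HasDerivAt (fun x : ℝ => Real.exp (-(Real.sqrt 3/2*x)))
      (Real.exp (-(Real.sqrt 3/2*k)) * (-(Real.sqrt 3/2))) k := hlin.neg.exp
  have hu : HasDerivAt (fun x : ℝ => (x - Kc n)/2) (1/2) k := by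
    simpa using ((hasDerivAt_id k).sub_const (Kc n)).div_const 2
  have hv : HasDerivAt (fun x : ℝ => x - Kc n - π/3) 1 k := by
    simpa using ((hasDerivAt_id k).sub_const (Kc n)).sub_const (π/3)
  have hw : HasDerivAt (fun x : ℝ => (x - Kc n)/2 - 5*π/6) (1/2) k := hu.sub_const _
  have t1 : HasDerivAt (fun x : ℝ => 2*(Real.exp (Real.sqrt 3/2*x) * Real.sin ((x - Kc n)/2)))
      (2*(Real.exp (Real.sqrt 3/2*k) * (Real.sqrt 3/2) * Real.sin ((k - Kc n)/2)
        + Real.exp (Real.sqrt 3/2*k) * (Real.cos ((k - Kc n)/2) * (1/2)))) k :=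
    (hE.mul hu.sin).const_mul 2
  have t2 : HasDerivAt (fun x : ℝ => (2*(-1:ℝ)^n) * Real.cos (x - Kc n - π/3))
      ((2*(-1:ℝ)^n) * (-Real.sin (k - Kc n - π/3) * 1)) k :=
    hv.cos.const_mul _
  have t3 : HasDerivAt (fun x : ℝ => 2*(Real.exp (-(Real.sqrt 3/2*x)) * Real.cos ((x - Kc n)/2 - 5*π/6)))
      (2*(Real.exp (-(Real.sqrt 3/2*k)) * (-(Real.sqrt 3/2)) * Real.cos ((k - Kc n)/2 - 5*π/6)
        + Real.exp (-(Real.sqrt 3/2*k)) * (-Real.sin ((k - Kc n)/2 - 5*π/6) * (1/2)))) k :=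
    (hEm.mul hw.cos).const_mul 2
  have H := (t1.sub t2).sub t3
  refine H.congr_deriv ?_
  unfold Fn'
  ring

set_option maxHeartbeats 1600000 in
theorem stmt_2 :
    ∃ (C : ℝ) (N : ℕ), 0 < C ∧ ∀ n : ℕ, N ≤ n →
      ∃ k : ℝ, (k ∈ Set.Ioo ((2 * (n : ℝ) - 1) * Real.pi) (2 * (n : ℝ) * Real.pi) ∧
          Δ k = 0) ∧
        (∀ k' : ℝ, k' ∈ Set.Ioo ((2 * (n : ℝ) - 1) * Real.pi) (2 * (n : ℝ) * Real.pi) →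
          Δ k' = 0 → k' = k) ∧
        |k - (2 * (n : ℝ) - 1 / 3) * Real.pi| ≤ C * Real.exp (-(Real.sqrt 3 * n * Real.pi)) := by
  refine ⟨Real.exp 10, 10, Real.exp_pos 10, ?_⟩
  intro n hn
  have hπ1 : (3.141592:ℝ) < π := Real.pi_gt_d6
  have hπ2 : π < 3.15 := Real.pi_lt_d2
  have hπ0 : (0:ℝ) < π := by linarith
  have hs0 : 0 ≤ Real.sqrt 3 := Real.sqrt_nonneg 3
  have hs2 : Real.sqrt 3 ^ 2 = 3 := Real.sq_sqrt (by norm_num)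
  have hs3a : (1.7:ℝ) < Real.sqrt 3 := by nlinarith
  have hs3b : Real.sqrt 3 < 1.8 := by nlinarith
  have hn' : (10:ℝ) ≤ (n:ℝ) := by exact_mod_cast hn
  have hKc : Kc n = (2*(n:ℝ) - 1/3)*π := rfl
  set K : ℝ := (2*(n:ℝ) - 1/3)*π with hK
  set kL : ℝ := K - π/4 with hkL
  set kR : ℝ := K + π/6 with hkR
  clear_value K kL kR
  have h1 : (2*(n:ℝ)-1)*π < kL := by rw [hkL, hK]; nlinarith
  have h2 : kR < 2*(n:ℝ)*π := by rw [hkR, hK]; nlinarith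
  have h3 : kL < kR := by rw [hkL, hkR]; nlinarith
  have hLpos : 0 < (2*(n:ℝ)-1)*π := by nlinarith
  -- parity bound
  have hεb : ((-1:ℝ)^n = 1) ∨ ((-1:ℝ)^n = -1) := by
    rcases Nat.even_or_odd n with hp | hp
    · exact Or.inl hp.neg_one_pow
    · exact Or.inr hp.neg_one_pow
  have hε1 : -1 ≤ ((-1:ℝ)^n) := by rcases hεb with h|h <;> rw [h] <;> norm_num
  have hε2 : ((-1:ℝ)^n) ≤ 1 := by rcases hεb with h|h <;> rw [h] <;> norm_num
  -- exponential lower bound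
  have hEbound : ∀ x : ℝ, (2*(n:ℝ)-1)*π ≤ x → 30 < Real.exp (Real.sqrt 3/2*x) := by
    intro x hx
    have hx2 : Real.sqrt 3/2*((2*(n:ℝ)-1)*π) ≤ Real.sqrt 3/2*x :=
      mul_le_mul_of_nonneg_left hx (by positivity)
    have h30 : (30:ℝ) < Real.sqrt 3/2*((2*(n:ℝ)-1)*π) + 1 := by nlinarith
    have := Real.add_one_le_exp (Real.sqrt 3/2*x)
    linarith
  -- continuity
  have hcont : ∀ s : Set ℝ, ContinuousOn (Fn n) s := fun s x _ =>
    (hasDerivAt_Fn n x).continuousAt.continuousWithinAt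
  -- strict monotonicity on [kL, 2nπ]
  have hmono : StrictMonoOn (Fn n) (Set.Icc kL (2*(n:ℝ)*π)) := by
    apply strictMonoOn_of_deriv_pos (convex_Icc _ _) (hcont _)
    intro x hx
    rw [interior_Icc] at hx
    rw [(hasDerivAt_Fn n x).deriv]
    obtain ⟨hxa, hxb⟩ := hx
    have hδ1 : -(π/4) < x - K := by rw [hkL] at hxa; linarith
    have e2 : 2*(n:ℝ)*π = K + π/3 := by rw [hK]; ring
    have hδ2 : x - K < π/3 := by rw [e2] at hxb; linarith
    have hxpos : 0 < x := by linarith [h1.trans hxa]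
    rw [Fn', hKc]
    set u : ℝ := (x - K)/2 with hu
    have hsum : Real.sqrt 3/2 * Real.sin u + 1/2 * Real.cos u = Real.sin (u + π/6) := by
      rw [Real.sin_add, Real.cos_pi_div_six, Real.sin_pi_div_six]; ring
    rw [hsum]
    have hju : 0 ≤ u + π/6 := by rw [hu]; linarith
    have hju2 : u + π/6 ≤ π/2 := by rw [hu]; linarith
    have hj := Real.mul_le_sin hju hju2
    have hj2 : 1/12 ≤ Real.sin (u + π/6) := by
      have h6 : (1:ℝ)/12 = 2/π*(π/24) := by field_simp; ring
      have h7 : π/24 ≤ u + π/6 := by rw [hu]; linarith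
      have h8 : 2/π*(π/24) ≤ 2/π*(u + π/6) :=
        mul_le_mul_of_nonneg_left h7 (by positivity)
      linarith
    have hE := hEbound x (by linarith)
    have hE0 : (0:ℝ) < Real.exp (Real.sqrt 3/2*x) := Real.exp_pos _
    have hprod : Real.exp (Real.sqrt 3/2*x) * (1/12) ≤
        Real.exp (Real.sqrt 3/2*x) * Real.sin (u + π/6) :=
      mul_le_mul_of_nonneg_left hj2 hE0.le
    have hEm0 : (0:ℝ) ≤ Real.exp (-(Real.sqrt 3/2*x)) := (Real.exp_pos _).le
    have hEm1 : Real.exp (-(Real.sqrt 3/2*x)) ≤ 1 := Real.exp_le_one_iff.mpr (by nlinarith)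
    have hq : -(3:ℝ) ≤ Real.sqrt 3 * Real.cos ((x - K)/2 - 5*π/6) + Real.sin ((x - K)/2 - 5*π/6) := by
      nlinarith [Real.neg_one_le_cos ((x - K)/2 - 5*π/6), Real.cos_le_one ((x - K)/2 - 5*π/6),
        Real.neg_one_le_sin ((x - K)/2 - 5*π/6), Real.sin_le_one ((x - K)/2 - 5*π/6)]
    have hA : Real.exp (-(Real.sqrt 3/2*x)) * (-3) ≤
        Real.exp (-(Real.sqrt 3/2*x)) * (Real.sqrt 3 * Real.cos ((x - K)/2 - 5*π/6) + Real.sin ((x - K)/2 - 5*π/6)) :=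
      mul_le_mul_of_nonneg_left hq hEm0
    have hB : -2 ≤ (2*(-1:ℝ)^n) * Real.sin (x - K - π/3) := by
      nlinarith [Real.neg_one_le_sin (x - K - π/3), Real.sin_le_one (x - K - π/3)]
    nlinarith [hprod, hA, hB]
  -- negativity on the left part
  have hneg : ∀ x : ℝ, (2*(n:ℝ)-1)*π < x → x ≤ kL → Fn n x < 0 := by
    intro x hxa hxb
    have e1 : (2*(n:ℝ)-1)*π = K - 2*π/3 := by rw [hK]; ring
    have hδ1 : -(2*π/3) < x - K := by rw [e1] at hxa; linarith
    have hδ2 : x - K ≤ -(π/4) := by rw [hkL] at hxb; linarith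
    rw [Fn, hKc]
    have hju : 0 ≤ -((x - K)/2) := by linarith
    have hju2 : -((x - K)/2) ≤ π/2 := by linarith
    have hj := Real.mul_le_sin hju hju2
    have hsneg : Real.sin ((x - K)/2) ≤ -(1/4) := by
      have h6 : (1:ℝ)/4 = 2/π*(π/8) := by field_simp; ring
      have h7 : π/8 ≤ -((x - K)/2) := by linarith
      have h8 : 2/π*(π/8) ≤ 2/π*(-((x - K)/2)) :=
        mul_le_mul_of_nonneg_left h7 (by positivity)
      have h9 : Real.sin (-((x-K)/2)) = -Real.sin ((x-K)/2) := Real.sin_neg _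
      linarith
    have hE := hEbound x (le_of_lt hxa)
    have hE0 : (0:ℝ) < Real.exp (Real.sqrt 3/2*x) := Real.exp_pos _
    have hprod : Real.exp (Real.sqrt 3/2*x) * Real.sin ((x - K)/2) ≤
        Real.exp (Real.sqrt 3/2*x) * (-(1/4)) :=
      mul_le_mul_of_nonneg_left hsneg hE0.le
    have hEm0 : (0:ℝ) ≤ Real.exp (-(Real.sqrt 3/2*x)) := (Real.exp_pos _).le
    have hEm1 : Real.exp (-(Real.sqrt 3/2*x)) ≤ 1 := Real.exp_le_one_iff.mpr (by nlinarith)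
    nlinarith [hprod,
      Real.neg_one_le_cos (x - K - π/3), Real.cos_le_one (x - K - π/3),
      Real.neg_one_le_cos ((x - K)/2 - 5*π/6), Real.cos_le_one ((x - K)/2 - 5*π/6),
      mul_le_mul_of_nonneg_left (Real.neg_one_le_cos ((x - K)/2 - 5*π/6)) hEm0,
      mul_le_mul_of_nonneg_left (Real.cos_le_one ((x - K)/2 - 5*π/6)) hEm0]
  -- value at right endpoint
  have hFR : 0 < Fn n kR := by
    rw [Fn, hKc]
    have e : (kR - K)/2 = π/12 := by rw [hkR]; ring
    rw [e]
    have hj := Real.mul_le_sin (x := π/12) (by positivity) (by linarith)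
    have hj2 : 1/6 ≤ Real.sin (π/12) := by
      have h6 : (1:ℝ)/6 = 2/π*(π/12) := by field_simp; ring
      linarith
    have hE := hEbound kR (by linarith)
    have hE0 : (0:ℝ) < Real.exp (Real.sqrt 3/2*kR) := Real.exp_pos _
    have hprod : Real.exp (Real.sqrt 3/2*kR) * (1/6) ≤
        Real.exp (Real.sqrt 3/2*kR) * Real.sin (π/12) :=
      mul_le_mul_of_nonneg_left hj2 hE0.le
    have hEm0 : (0:ℝ) ≤ Real.exp (-(Real.sqrt 3/2*kR)) := (Real.exp_pos _).le
    have hEm1 : Real.exp (-(Real.sqrt 3/2*kR)) ≤ 1 := Real.exp_le_one_iff.mpr (by nlinarith)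
    nlinarith [hprod,
      Real.neg_one_le_cos (kR - K - π/3), Real.cos_le_one (kR - K - π/3),
      Real.neg_one_le_cos (π/12 - 5*π/6), Real.cos_le_one (π/12 - 5*π/6),
      mul_le_mul_of_nonneg_left (Real.neg_one_le_cos (π/12 - 5*π/6)) hEm0,
      mul_le_mul_of_nonneg_left (Real.cos_le_one (π/12 - 5*π/6)) hEm0]
  have hFL : Fn n kL < 0 := hneg kL h1 le_rfl
  -- IVT
  obtain ⟨k, hkmem, hk0⟩ :=
    intermediate_value_Icc h3.le (hcont (Set.Icc kL kR)) ⟨hFL.le, hFR.le⟩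
  refine ⟨k, ⟨⟨lt_of_lt_of_le h1 hkmem.1, lt_of_le_of_lt hkmem.2 h2⟩,
      (delta_zero_iff n k).mpr hk0⟩, ?_, ?_⟩
  · -- uniqueness
    intro k' hk' hΔ'
    have hFk' : Fn n k' = 0 := (delta_zero_iff n k').mp hΔ'
    by_cases hcase : k' ≤ kL
    · exact absurd hFk' (ne_of_lt (hneg k' hk'.1 hcase))
    · push_neg at hcase
      have hm1 : k' ∈ Set.Icc kL (2*(n:ℝ)*π) := ⟨hcase.le, hk'.2.le⟩
      have hm2 : k ∈ Set.Icc kL (2*(n:ℝ)*π) := ⟨hkmem.1, hkmem.2.trans h2.le⟩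
      exact hmono.injOn hm1 hm2 (hFk'.trans hk0.symm)
  · -- the bound
    obtain ⟨hkm1, hkm2⟩ := hkmem
    have hδ1 : -(π/4) ≤ k - K := by rw [hkL] at hkm1; linarith
    have hδ2 : k - K ≤ π/6 := by rw [hkR] at hkm2; linarith
    have hE0 : (0:ℝ) < Real.exp (Real.sqrt 3/2*k) := Real.exp_pos _
    have hEm0 : (0:ℝ) < Real.exp (-(Real.sqrt 3/2*k)) := Real.exp_pos _
    have hEm1 : Real.exp (-(Real.sqrt 3/2*k)) ≤ 1 := Real.exp_le_one_iff.mpr (by nlinarith [h1.trans_le hkm1, hLpos])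
    -- from Fn n k = 0 : bound on E * sin((k-K)/2)
    rw [Fn, hKc] at hk0
    have hEs : |Real.exp (Real.sqrt 3/2*k) * Real.sin ((k - K)/2)| ≤ 2 := by
      rw [abs_le]
      constructor <;>
        nlinarith [Real.neg_one_le_cos (k - K - π/3), Real.cos_le_one (k - K - π/3),
          Real.neg_one_le_cos ((k - K)/2 - 5*π/6), Real.cos_le_one ((k - K)/2 - 5*π/6),
          mul_le_mul_of_nonneg_left (Real.neg_one_le_cos ((k - K)/2 - 5*π/6)) hEm0.le,
          mul_le_mul_of_nonneg_left (Real.cos_le_one ((k - K)/2 - 5*π/6)) hEm0.le]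
    -- Jordan: |k-K|/π ≤ |sin((k-K)/2)|
    have hjordan : |k - K|/π ≤ |Real.sin ((k - K)/2)| := by
      rcases le_or_gt 0 (k - K) with hc | hc
      · have hj := Real.mul_le_sin (x := (k - K)/2) (by linarith) (by linarith)
        have : |k - K| = k - K := abs_of_nonneg hc
        rw [this]
        have h0 : (k-K)/π = 2/π*((k-K)/2) := by field_simp
        calc (k-K)/π = 2/π*((k-K)/2) := h0
          _ ≤ Real.sin ((k-K)/2) := hj
          _ ≤ |Real.sin ((k-K)/2)| := le_abs_self _
      · have hj := Real.mul_le_sin (x := -((k - K)/2)) (by linarith) (by linarith)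
        have habs : |k - K| = -(k - K) := abs_of_neg hc
        rw [habs]
        have h9 : Real.sin (-((k-K)/2)) = -Real.sin ((k-K)/2) := Real.sin_neg _
        have h0 : (-(k-K))/π = 2/π*(-((k-K)/2)) := by field_simp
        calc (-(k-K))/π = 2/π*(-((k-K)/2)) := h0
          _ ≤ Real.sin (-((k-K)/2)) := hj
          _ ≤ |Real.sin ((k-K)/2)| := by rw [h9]; exact neg_le_abs _
    -- combine: |k - K| ≤ 2π * exp(-(√3/2 k))
    have hcomb : |k - K| ≤ 2*π*Real.exp (-(Real.sqrt 3/2*k)) := by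
      have h5 : Real.exp (Real.sqrt 3/2*k) * (|k - K|/π) ≤
          Real.exp (Real.sqrt 3/2*k) * |Real.sin ((k - K)/2)| :=
        mul_le_mul_of_nonneg_left hjordan hE0.le
      have h6 : Real.exp (Real.sqrt 3/2*k) * |Real.sin ((k - K)/2)| ≤ 2 := by
        rw [← abs_of_pos hE0, ← abs_mul]; exact hEs
      have h7 : Real.exp (Real.sqrt 3/2*k) * (|k - K|/π) ≤ 2 := le_trans h5 h6
      have h8 : Real.exp (Real.sqrt 3/2*k) * Real.exp (-(Real.sqrt 3/2*k)) = 1 := by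
        rw [← Real.exp_add]; simp
      have h9 : |k - K|/π ≤ 2 * Real.exp (-(Real.sqrt 3/2*k)) := by
        have h10 := mul_le_mul_of_nonneg_left h7 hEm0.le
        rw [← mul_assoc, mul_comm (Real.exp (-(Real.sqrt 3/2*k))) (Real.exp (Real.sqrt 3/2*k)), h8, one_mul] at h10
        linarith
      have h11 := mul_le_mul_of_nonneg_left h9 hπ0.le
      have h12 : π * (|k - K|/π) = |k - K| := by field_simp
      rw [h12] at h11
      linarith
    -- final chain
    have h2pi : 2*π ≤ Real.exp 2 := by
      have he : (2.7:ℝ) < Real.exp 1 := lt_trans (by norm_num) Real.exp_one_gt_d9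
      have h22 : Real.exp 2 = Real.exp 1 * Real.exp 1 := by
        rw [← Real.exp_add]; norm_num
      nlinarith [he, h22]
    have hchain : 2*π*Real.exp (-(Real.sqrt 3/2*k)) ≤ Real.exp 10 * Real.exp (-(Real.sqrt 3*(n:ℝ)*π)) := by
      have hck : Real.sqrt 3/2*kL ≤ Real.sqrt 3/2*k :=
        mul_le_mul_of_nonneg_left hkm1 (by positivity)
      have hexp1 : Real.exp 2 * Real.exp (-(Real.sqrt 3/2*k)) = Real.exp (2 - Real.sqrt 3/2*k) := by
        rw [← Real.exp_add]; ring_nf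
      have hexp2 : Real.exp 10 * Real.exp (-(Real.sqrt 3*(n:ℝ)*π)) = Real.exp (10 - Real.sqrt 3*(n:ℝ)*π) := by
        rw [← Real.exp_add]; ring_nf
      have hle : 2 - Real.sqrt 3/2*k ≤ 10 - Real.sqrt 3*(n:ℝ)*π := by
        rw [hkL, hK] at hck
        have hsp : Real.sqrt 3 * π ≤ 1.8*3.15 := by
          calc Real.sqrt 3 * π ≤ 1.8*π := mul_le_mul_of_nonneg_right hs3b.le hπ0.le
            _ ≤ 1.8*3.15 := by linarith
        linarith [hck, hsp]
      calc 2*π*Real.exp (-(Real.sqrt 3/2*k))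
          ≤ Real.exp 2 * Real.exp (-(Real.sqrt 3/2*k)) :=
            mul_le_mul_of_nonneg_right h2pi hEm0.le
        _ = Real.exp (2 - Real.sqrt 3/2*k) := hexp1
        _ ≤ Real.exp (10 - Real.sqrt 3*(n:ℝ)*π) := Real.exp_le_exp.mpr hle
        _ = Real.exp 10 * Real.exp (-(Real.sqrt 3*(n:ℝ)*π)) := hexp2.symm
    calc |k - K| ≤ 2*π*Real.exp (-(Real.sqrt 3/2*k)) := hcomb
      _ ≤ Real.exp 10 * Real.exp (-(Real.sqrt 3*(n:ℝ)*π)) := hchain
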